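/- Let q ≥ 3 be an integer and Γ_q the Hecke triangle group in SL(2,ℝ). Let h ∈ Γ_q satisfy h • ∞ > h • 0 ≥ 0 in ℝ ∪ {∞} (with the convention r < ∞ for all r ∈ ℝ). Then there exist unique ℓ ∈ ℕ₀ and k₁, …, k_ℓ ∈ {1, …, q−1} such that h = p_{k₁} ⋯ p_{k_ℓ} or h = −p_{k₁} ⋯ p_{k_ℓ} (the empty product being the identity matrix). -/

import Mathlib

noncomputable section

open OnePoint

abbrev SL2 := Matrix.SpecialLinearGroup (Fin 2) ℝ

/-- `S = [[0,1],[−1,0]] ∈ SL(2,ℝ)`. -/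
def Smat : SL2 := ⟨!![0, 1; -1, 0], by norm_num [Matrix.det_fin_two_of]⟩

/-- `T_q = [[1, λ_q],[0,1]] ∈ SL(2,ℝ)` where `λ_q = 2cos(π/q)`. -/
def Tmat (q : ℕ) : SL2 :=
  ⟨!![1, 2 * Real.cos (Real.pi / q); 0, 1], by norm_num [Matrix.det_fin_two_of]⟩

/-- The Hecke triangle group `Γ_q ≤ SL(2,ℝ)`, generated by `S` and `T_q`. -/
def Hecke (q : ℕ) : Subgroup SL2 := Subgroup.closure {Smat, Tmat q}

/-- The matrix `p_k = (1/sin(π/q)) · [[sin(kπ/q), sin((k+1)π/q)], [sin((k−1)π/q), sin(kπ/q)]]`. -/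
def pMat (q : ℕ) (k : ℤ) : Matrix (Fin 2) (Fin 2) ℝ :=
  (Real.sin (Real.pi / q))⁻¹ •
    !![Real.sin ((k : ℝ) * Real.pi / q), Real.sin (((k : ℝ) + 1) * Real.pi / q);
       Real.sin (((k : ℝ) - 1) * Real.pi / q), Real.sin ((k : ℝ) * Real.pi / q)]

/-- The Möbius action of `SL(2,ℝ)` on `ℝ ∪ {∞}`:
`[[a,b],[c,d]] • x = (ax+b)/(cx+d)` for `x ∈ ℝ` with `cx+d ≠ 0`, `= ∞` if `cx+d = 0`;
`[[a,b],[c,d]] • ∞ = a/c` if `c ≠ 0` and `= ∞` if `c = 0`. -/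
def mob (g : SL2) (x : OnePoint ℝ) : OnePoint ℝ :=
  match x with
  | OnePoint.some r =>
      if g.1 1 0 * r + g.1 1 1 = 0 then ∞
      else (((g.1 0 0 * r + g.1 0 1) / (g.1 1 0 * r + g.1 1 1) : ℝ) : OnePoint ℝ)
  | OnePoint.infty =>
      if g.1 1 0 = 0 then ∞ else ((g.1 0 0 / g.1 1 0 : ℝ) : OnePoint ℝ)

/-- The strict order on `ℝ ∪ {∞}` extending that of `ℝ` by `r < ∞` for every `r ∈ ℝ`. -/
def opLT : OnePoint ℝ → OnePoint ℝ → Prop :=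
  fun u v =>
    match u, v with
    | OnePoint.some r, OnePoint.some s => r < s
    | OnePoint.some _, OnePoint.infty => True
    | OnePoint.infty, _ => False

/-- The order on `ℝ ∪ {∞}` extending that of `ℝ` by `r < ∞` for every `r ∈ ℝ`. -/
def opLE (u v : OnePoint ℝ) : Prop := u = v ∨ opLT u v

/-! With `θ = π/q`, the formula for `p_k` makes sense for every `k ∈ ℤ`, and the sine addition
formula gives `p_a S p_b = -p_{a+b}`, together with `p_0 = S`, `p_1 = T_q` and `p_q = -S`.
Hence left multiplication by `S^{±1}` and `T_q^{±1}` preserves the set of matrices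
`±S^δ p_{k₁} ⋯ p_{k_ℓ} S^δ'` with all `kᵢ ∈ {1, …, q-1}`: two letters separated by `S` merge
into one, cancel to `S`, or wrap around modulo `q`. So every element of `Γ_q` has this form.

For `1 ≤ k ≤ q-1`, `p_k` has positive diagonal and nonnegative off-diagonal entries, hence so
do the words in them, and the hypothesis `h • ∞ > h • 0 ≥ 0` says exactly that `±h` has this
sign pattern; this forces `δ = δ' = 0`, or `δ = δ' = 1` with the empty word.
Uniqueness: `S p_{-k} S` is a left inverse of `p_k`, so `p_k N = p_j N'` with `k < j` and
`N, N'` of that sign pattern would give `N = -S p_{j-k} N'`, whose `(0,1)` entry is negative. -/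

namespace HeckeTriangle

open Real

local notation "𝕄" => Matrix (Fin 2) (Fin 2) ℝ
local notation "𝕊" => (Smat : 𝕄)

variable {q : ℕ}

lemma sin_pi_div_pos (hq : 2 ≤ q) : 0 < sin (π / q) := by
  apply sin_pos_of_pos_of_lt_pi (by positivity)
  exact div_lt_self pi_pos (by exact_mod_cast hq)

lemma sin_mul_pi_div_pos {x : ℝ} (hx₀ : 0 < x) (hx : x < q) : 0 < sin (x * (π / q)) := by
  have hq : (0 : ℝ) < q := hx₀.trans hx
  apply sin_pos_of_pos_of_lt_pi (by positivity)
  rwa [mul_div_assoc', div_lt_iff₀ hq, mul_comm, mul_lt_mul_iff_of_pos_left pi_pos]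

lemma sin_mul_pi_div_nonneg (hq : 0 < q) {x : ℝ} (hx₀ : 0 ≤ x) (hx : x ≤ q) :
    0 ≤ sin (x * (π / q)) := by
  apply sin_nonneg_of_nonneg_of_le_pi (by positivity)
  rwa [mul_div_assoc', div_le_iff₀ (by exact_mod_cast hq), mul_comm,
    mul_le_mul_iff_of_pos_left pi_pos]

lemma sin_add_mul_sin_sub_sin_mul_sin_sub (u v t : ℝ) :
    sin (u + t) * sin v - sin u * sin (v - t) = sin t * sin (u + v) := by
  simp only [sin_add, sin_sub]; ring

lemma pMat_eq (q : ℕ) (k : ℤ) : pMat q k = (sin (π / q))⁻¹ •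
    !![sin (k * (π / q)), sin (k * (π / q) + π / q);
       sin (k * (π / q) - π / q), sin (k * (π / q))] := by
  simp only [pMat, add_mul, sub_mul, one_mul, add_div, sub_div, mul_div_assoc]

lemma pMat_apply (q : ℕ) (k : ℤ) :
    pMat q k 0 0 = (sin (π / q))⁻¹ * sin (k * (π / q)) ∧
    pMat q k 0 1 = (sin (π / q))⁻¹ * sin ((k + 1) * (π / q)) ∧
    pMat q k 1 0 = (sin (π / q))⁻¹ * sin ((k - 1) * (π / q)) ∧
    pMat q k 1 1 = (sin (π / q))⁻¹ * sin (k * (π / q)) := by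
  simp [pMat, mul_div_assoc]

lemma Smat_mul_Smat : 𝕊 * 𝕊 = -1 := by
  ext i j; fin_cases i <;> fin_cases j <;> simp [Smat, Matrix.mul_apply]

lemma Smat_mul_eq (m : 𝕄) : 𝕊 * m = !![m 1 0, m 1 1; -m 0 0, -m 0 1] := by
  ext i j; fin_cases i <;> fin_cases j <;> simp [Smat, Matrix.mul_apply, Fin.sum_univ_two]

lemma mul_Smat_eq (m : 𝕄) : m * 𝕊 = !![-m 0 1, m 0 0; -m 1 1, m 1 0] := by
  ext i j; fin_cases i <;> fin_cases j <;> simp [Smat, Matrix.mul_apply, Fin.sum_univ_two]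

lemma pMat_mul_Smat_mul_pMat (hq : 2 ≤ q) (a b : ℤ) :
    pMat q a * 𝕊 * pMat q b = -pMat q (a + b) := by
  have hσ := (sin_pi_div_pos hq).ne'
  simp only [pMat_eq, Int.cast_add, add_mul]
  generalize π / q = θ at *
  generalize (a : ℝ) * θ = u
  generalize (b : ℝ) * θ = v
  have e₁ := sin_add_mul_sin_sub_sin_mul_sin_sub u v θ
  have e₂ := sin_add_mul_sin_sub_sin_mul_sin_sub u (v + θ) θ
  have e₃ := sin_add_mul_sin_sub_sin_mul_sin_sub (u - θ) v θ
  have e₄ := sin_add_mul_sin_sub_sin_mul_sin_sub (u - θ) (v + θ) θ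
  simp only [add_sub_cancel_right, sub_add_cancel, ← add_assoc, sub_add_eq_add_sub] at e₂ e₃ e₄
  ext i j
  fin_cases i <;> fin_cases j <;> simp [Smat, Matrix.mul_apply, Fin.sum_univ_two] <;> field_simp
  · linear_combination -e₁
  · linear_combination -e₂
  · linear_combination -e₃
  · linear_combination -e₄

lemma pMat_zero (hq : 2 ≤ q) : pMat q 0 = 𝕊 := by
  have hσ := (sin_pi_div_pos hq).ne'
  rw [pMat_eq]
  ext i j; fin_cases i <;> fin_cases j <;> simp [Smat, hσ]

lemma pMat_self (hq : 2 ≤ q) : pMat q q = -𝕊 := by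
  have hσ := (sin_pi_div_pos hq).ne'
  have hπ : (q : ℝ) * (π / q) = π := mul_div_cancel₀ π (by positivity)
  rw [pMat_eq, Int.cast_natCast, hπ, sin_pi, add_comm π, sin_add_pi, sin_pi_sub]
  ext i j; fin_cases i <;> fin_cases j <;> simp [Smat, hσ]

lemma pMat_add_self (hq : 2 ≤ q) (k : ℤ) : pMat q (k + q) = -pMat q k := by
  rw [← neg_neg (pMat q (k + q)), ← pMat_mul_Smat_mul_pMat hq, pMat_self hq, mul_neg,
    mul_assoc, Smat_mul_Smat]
  simp

lemma pMat_one (hq : 2 ≤ q) : pMat q 1 = Tmat q := by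
  have hσ := (sin_pi_div_pos hq).ne'
  rw [pMat_eq]
  ext i j; fin_cases i <;> fin_cases j <;> simp [Tmat, hσ, ← two_mul, sin_two_mul]
  field_simp

lemma Smat_mul_pMat_neg_mul_Smat_mul_pMat (hq : 2 ≤ q) (a b : ℤ) :
    𝕊 * pMat q (-a) * 𝕊 * pMat q b = -(𝕊 * pMat q (b - a)) := by
  rw [show 𝕊 * pMat q (-a) * 𝕊 * pMat q b = 𝕊 * (pMat q (-a) * 𝕊 * pMat q b) by
    simp only [mul_assoc], pMat_mul_Smat_mul_pMat hq, neg_add_eq_sub, mul_neg]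

structure NonnegPosDiag (m : 𝕄) : Prop where
  pos₀₀ : 0 < m 0 0
  nonneg₀₁ : 0 ≤ m 0 1
  nonneg₁₀ : 0 ≤ m 1 0
  pos₁₁ : 0 < m 1 1

lemma nonnegPosDiag_one : NonnegPosDiag 1 := ⟨by simp, by simp, by simp, by simp⟩

lemma NonnegPosDiag.mul {m n : 𝕄} (hm : NonnegPosDiag m)
    (hn : NonnegPosDiag n) : NonnegPosDiag (m * n) := by
  obtain ⟨a, b, c, d⟩ := hm
  obtain ⟨a', b', c', d'⟩ := hn
  refine ⟨?_, ?_, ?_, ?_⟩ <;> simp only [Matrix.mul_apply, Fin.sum_univ_two] <;> positivity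

lemma NonnegPosDiag.offDiag_mul_pos {m n : 𝕄} (hm : NonnegPosDiag m)
    (hn : NonnegPosDiag n) (hoff : 0 < m 0 1 + m 1 0) : 0 < (m * n) 0 1 + (m * n) 1 0 := by
  obtain ⟨a, b, c, d⟩ := hm
  obtain ⟨a', b', c', d'⟩ := hn
  simp only [Matrix.mul_apply, Fin.sum_univ_two]
  rcases b.lt_or_eq with h | h
  · nlinarith [mul_pos h d', mul_nonneg a.le b', mul_nonneg c a'.le, mul_nonneg d.le c']
  · have hc : 0 < m 1 0 := by linarith
    nlinarith [mul_pos hc a', mul_nonneg a.le b', mul_nonneg b d'.le, mul_nonneg d.le c']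

lemma nonnegPosDiag_pMat (hq : 2 ≤ q) {k : ℕ} (hk : 1 ≤ k ∧ k ≤ q - 1) :
    NonnegPosDiag (pMat q k) := by
  have hσ := inv_pos.mpr (sin_pi_div_pos hq)
  have hk₀ : (1 : ℝ) ≤ k := by exact_mod_cast hk.1
  have hkq : (k : ℝ) + 1 ≤ q := by exact_mod_cast (by omega : k + 1 ≤ q)
  have hs : 0 < sin (k * (π / q)) := sin_mul_pi_div_pos (by linarith) (by linarith)
  obtain ⟨h₀₀, h₀₁, h₁₀, h₁₁⟩ := pMat_apply q k
  simp only [Int.cast_natCast] at h₀₀ h₀₁ h₁₀ h₁₁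
  refine ⟨?_, ?_, ?_, ?_⟩
  · rw [h₀₀]; positivity
  · rw [h₀₁]; exact mul_nonneg hσ.le (sin_mul_pi_div_nonneg (by omega) (by linarith) hkq)
  · rw [h₁₀]; exact mul_nonneg hσ.le (sin_mul_pi_div_nonneg (by omega) (by linarith) (by linarith))
  · rw [h₁₁]; positivity

lemma pMat_offDiag_pos (hq : 3 ≤ q) {k : ℕ} (hk : 1 ≤ k ∧ k ≤ q - 1) :
    0 < pMat q k 0 1 + pMat q k 1 0 := by
  have hσ := inv_pos.mpr (sin_pi_div_pos (by omega : 2 ≤ q))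
  have hk₀ : (1 : ℝ) ≤ k := by exact_mod_cast hk.1
  have hkq : (k : ℝ) + 1 ≤ q := by exact_mod_cast (by omega : k + 1 ≤ q)
  have hs : 0 < sin (k * (π / q)) := sin_mul_pi_div_pos (by linarith) (by linarith)
  have hc : 0 < cos (π / q) := by
    apply cos_pos_of_mem_Ioo ⟨by linarith [pi_pos, div_pos pi_pos (by positivity : (0:ℝ) < q)], ?_⟩
    exact div_lt_div_of_pos_left pi_pos two_pos (by exact_mod_cast hq)
  have hsum : sin ((k + 1) * (π / q)) + sin ((k - 1) * (π / q)) =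
      2 * sin (k * (π / q)) * cos (π / q) := by
    rw [add_mul, sub_mul, one_mul, sin_add, sin_sub]; ring
  obtain ⟨-, h₀₁, h₁₀, -⟩ := pMat_apply q k
  rw [h₀₁, h₁₀, ← mul_add]
  push_cast
  rw [hsum]
  positivity

def Admissible (q : ℕ) (L : List ℕ) : Prop := ∀ k ∈ L, 1 ≤ k ∧ k ≤ q - 1

def pWord (q : ℕ) (L : List ℕ) : 𝕄 := (L.map (fun k => pMat q (k : ℤ))).prod

lemma admissible_cons {k : ℕ} {L : List ℕ} :
    Admissible q (k :: L) ↔ (1 ≤ k ∧ k ≤ q - 1) ∧ Admissible q L :=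
  List.forall_mem_cons

lemma pWord_nil : pWord q [] = 1 := rfl

lemma pWord_cons (k : ℕ) (L : List ℕ) : pWord q (k :: L) = pMat q k * pWord q L := by
  simp [pWord]

lemma nonnegPosDiag_pWord (hq : 2 ≤ q) {L : List ℕ} (hL : Admissible q L) :
    NonnegPosDiag (pWord q L) := by
  induction L with
  | nil => exact nonnegPosDiag_one
  | cons k L ih =>
    rw [admissible_cons] at hL
    rw [pWord_cons]
    exact (nonnegPosDiag_pMat hq hL.1).mul (ih hL.2)

lemma pWord_offDiag_pos (hq : 3 ≤ q) {k : ℕ} {L : List ℕ} (hL : Admissible q (k :: L)) :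
    0 < pWord q (k :: L) 0 1 + pWord q (k :: L) 1 0 := by
  rw [admissible_cons] at hL
  rw [pWord_cons]
  exact (nonnegPosDiag_pMat (by omega) hL.1).offDiag_mul_pos
    (nonnegPosDiag_pWord (by omega) hL.2) (pMat_offDiag_pos hq hL.1)

lemma eq_of_pMat_mul_eq_pMat_mul (hq : 2 ≤ q) {k j : ℕ} (hk : 1 ≤ k ∧ k ≤ q - 1)
    (hj : 1 ≤ j ∧ j ≤ q - 1) {N N' : 𝕄} (hN : NonnegPosDiag N)
    (hN' : NonnegPosDiag N') (h : pMat q k * N = pMat q j * N') : k = j ∧ N = N' := by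
  wlog hkj : k ≤ j generalizing k j N N'
  · exact (this hj hk hN' hN h.symm (by omega)).imp Eq.symm Eq.symm
  have hN_eq : N = -(𝕊 * pMat q ((j : ℤ) - k)) * N' := by
    have h₁ := congrArg (𝕊 * pMat q (-k) * 𝕊 * ·) h
    simp only [← mul_assoc] at h₁
    rwa [Smat_mul_pMat_neg_mul_Smat_mul_pMat hq, Smat_mul_pMat_neg_mul_Smat_mul_pMat hq, sub_self,
      pMat_zero hq, Smat_mul_Smat, neg_neg, one_mul] at h₁
  rcases hkj.lt_or_eq with hlt | rfl
  · exfalso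
    have hm := nonnegPosDiag_pMat hq (k := j - k) (by omega)
    push_cast [hkj] at hm
    have h₀₁ := hN.nonneg₀₁
    rw [hN_eq, Matrix.neg_mul, Matrix.neg_apply, Matrix.mul_apply, Fin.sum_univ_two,
      Smat_mul_eq] at h₀₁
    simp only [Matrix.of_apply, Matrix.cons_val', Matrix.cons_val_zero, Matrix.cons_val_one,
      Matrix.empty_val', Matrix.cons_val_fin_one] at h₀₁
    nlinarith [mul_nonneg hm.nonneg₁₀ hN'.nonneg₀₁, mul_pos hm.pos₁₁ hN'.pos₁₁]
  · rw [sub_self, pMat_zero hq, Smat_mul_Smat, neg_neg, one_mul] at hN_eq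
    exact ⟨rfl, hN_eq⟩

lemma pWord_injective (hq : 3 ≤ q) {L₁ L₂ : List ℕ} (h₁ : Admissible q L₁)
    (h₂ : Admissible q L₂) (h : pWord q L₁ = pWord q L₂) : L₁ = L₂ := by
  induction L₁ generalizing L₂ with
  | nil =>
    cases L₂ with
    | nil => rfl
    | cons j L₂ =>
      have hoff := pWord_offDiag_pos hq h₂
      simp [← h, pWord_nil] at hoff
  | cons k L₁ ih =>
    cases L₂ with
    | nil =>
      have hoff := pWord_offDiag_pos hq h₁
      simp [h, pWord_nil] at hoff
    | cons j L₂ =>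
      rw [admissible_cons] at h₁ h₂
      rw [pWord_cons, pWord_cons] at h
      obtain ⟨rfl, hN⟩ := eq_of_pMat_mul_eq_pMat_mul (by omega) h₁.1 h₂.1
        (nonnegPosDiag_pWord (by omega) h₁.2) (nonnegPosDiag_pWord (by omega) h₂.2) h
      rw [ih h₁.2 h₂.2 hN]

lemma eq_of_eq_pWord_or_neg (hq : 3 ≤ q) {m : 𝕄} {L₁ L₂ : List ℕ}
    (h₁ : Admissible q L₁) (h₂ : Admissible q L₂) (hm₁ : m = pWord q L₁ ∨ m = -pWord q L₁)
    (hm₂ : m = pWord q L₂ ∨ m = -pWord q L₂) : L₁ = L₂ := by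
  apply pWord_injective hq h₁ h₂
  have p₁ := (nonnegPosDiag_pWord (by omega) h₁).pos₀₀
  have p₂ := (nonnegPosDiag_pWord (by omega) h₂).pos₀₀
  rcases hm₁ with rfl | rfl <;> rcases hm₂ with h | h
  · exact h
  · have := congrFun₂ h 0 0; rw [Matrix.neg_apply] at this; linarith
  · have := congrFun₂ h 0 0; rw [Matrix.neg_apply] at this; linarith
  · exact neg_inj.mp h

def sPow (δ : Bool) : 𝕄 := bif δ then 𝕊 else 1

def IsNormalForm (q : ℕ) (m : 𝕄) : Prop :=
  ∃ (δ δ' : Bool) (L : List ℕ), Admissible q L ∧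
    (m = sPow δ * pWord q L * sPow δ' ∨ m = -(sPow δ * pWord q L * sPow δ'))

lemma IsNormalForm.neg {m : 𝕄} (hm : IsNormalForm q m) :
    IsNormalForm q (-m) := by
  obtain ⟨δ, δ', L, hL, rfl | rfl⟩ := hm
  · exact ⟨δ, δ', L, hL, Or.inr rfl⟩
  · exact ⟨δ, δ', L, hL, Or.inl (neg_neg _)⟩

lemma isNormalForm_one : IsNormalForm q 1 :=
  ⟨false, false, [], by simp [Admissible], Or.inl (by simp [sPow, pWord_nil])⟩

lemma IsNormalForm.map_of_odd {m : 𝕄} (hm : IsNormalForm q m)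
    {f : 𝕄 → 𝕄} (hf : ∀ x, f (-x) = -f x)
    (H : ∀ δ δ' L, Admissible q L → IsNormalForm q (f (sPow δ * pWord q L * sPow δ'))) :
    IsNormalForm q (f m) := by
  obtain ⟨δ, δ', L, hL, rfl | rfl⟩ := hm
  · exact H δ δ' L hL
  · rw [hf]; exact (H δ δ' L hL).neg

lemma IsNormalForm.Smat_mul {m : 𝕄} (hm : IsNormalForm q m) :
    IsNormalForm q (𝕊 * m) := by
  refine hm.map_of_odd (fun x => mul_neg _ x) fun δ δ' L hL => ?_
  cases δ
  · exact ⟨true, δ', L, hL, Or.inl (by simp [sPow, mul_assoc])⟩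
  · exact ⟨false, δ', L, hL, Or.inr (by simp [sPow, ← mul_assoc, Smat_mul_Smat])⟩

lemma pMat_mul_Smat_mul_pMat_cases (hq : 2 ≤ q) {a b : ℕ} (ha : 1 ≤ a ∧ a ≤ q - 1)
    (hb : 1 ≤ b ∧ b ≤ q - 1) :
    pMat q a * 𝕊 * pMat q b = 𝕊 ∨ ∃ c, (1 ≤ c ∧ c ≤ q - 1) ∧
      (pMat q a * 𝕊 * pMat q b = pMat q c ∨ pMat q a * 𝕊 * pMat q b = -pMat q c) := by
  rw [pMat_mul_Smat_mul_pMat hq]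
  rcases lt_trichotomy (a + b) q with hlt | heq | hgt
  · exact Or.inr ⟨a + b, by omega, Or.inr (by push_cast; rfl)⟩
  · left
    rw [← Nat.cast_add, heq, pMat_self hq, neg_neg]
  · refine Or.inr ⟨a + b - q, by omega, Or.inl ?_⟩
    rw [show (a : ℤ) + b = ((a + b - q : ℕ) : ℤ) + q by push_cast [hgt.le]; ring,
      pMat_add_self hq, neg_neg]

lemma IsNormalForm.pMat_mul (hq : 2 ≤ q) {k : ℕ} (hk : 1 ≤ k ∧ k ≤ q - 1)
    {m : 𝕄} (hm : IsNormalForm q m) : IsNormalForm q (pMat q k * m) := by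
  refine hm.map_of_odd (fun x => mul_neg _ x) fun δ δ' L hL => ?_
  cases δ with
  | false =>
    exact ⟨false, δ', k :: L, admissible_cons.mpr ⟨hk, hL⟩,
      Or.inl (by simp [sPow, pWord_cons, mul_assoc])⟩
  | true =>
    cases L with
    | nil =>
      cases δ'
      · exact ⟨false, true, [k], by simpa [Admissible] using hk, Or.inl (by simp [sPow, pWord])⟩
      · exact ⟨false, false, [k], by simpa [Admissible] using hk,
          Or.inr (by simp [sPow, pWord, Smat_mul_Smat])⟩
    | cons b L =>
      rw [admissible_cons] at hL
      have hassoc : pMat q k * (sPow true * pWord q (b :: L) * sPow δ') =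
          pMat q k * 𝕊 * pMat q b * pWord q L * sPow δ' := by
        simp [sPow, pWord_cons, mul_assoc]
      rw [hassoc]
      rcases pMat_mul_Smat_mul_pMat_cases hq hk hL.1 with h | ⟨c, hc, h | h⟩ <;> rw [h]
      · exact ⟨true, δ', L, hL.2, Or.inl rfl⟩
      · exact ⟨false, δ', c :: L, admissible_cons.mpr ⟨hc, hL.2⟩,
          Or.inl (by simp [sPow, pWord_cons, mul_assoc])⟩
      · exact ⟨false, δ', c :: L, admissible_cons.mpr ⟨hc, hL.2⟩,
          Or.inr (by simp [sPow, pWord_cons, mul_assoc])⟩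

lemma coe_inv_eq_of_mul_eq_one {g : SL2} {x : 𝕄}
    (h : (g : 𝕄) * x = 1) : ((g⁻¹ : SL2) : 𝕄) = x := by
  calc ((g⁻¹ : SL2) : 𝕄)
      = (g⁻¹ : SL2) * ((g : 𝕄) * x) := by rw [h, mul_one]
    _ = x := by
      rw [← mul_assoc, ← Matrix.SpecialLinearGroup.coe_mul, inv_mul_cancel,
        Matrix.SpecialLinearGroup.coe_one, one_mul]

lemma coe_Smat_inv : ((Smat⁻¹ : SL2) : 𝕄) = -𝕊 :=
  coe_inv_eq_of_mul_eq_one (by rw [mul_neg, Smat_mul_Smat, neg_neg])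

lemma coe_Tmat_inv (hq : 2 ≤ q) :
    (((Tmat q)⁻¹ : SL2) : 𝕄) = -(𝕊 * pMat q ((q - 1 : ℕ) : ℤ) * 𝕊) := by
  apply coe_inv_eq_of_mul_eq_one
  rw [← pMat_one hq, mul_neg, ← mul_assoc, ← mul_assoc, pMat_mul_Smat_mul_pMat hq,
    show (1 : ℤ) + ((q - 1 : ℕ) : ℤ) = q by omega, pMat_self hq]
  simp [Smat_mul_Smat]

theorem isNormalForm_of_mem_hecke (hq : 2 ≤ q) {h : SL2} (hh : h ∈ Hecke q) :
    IsNormalForm q h := by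
  have hq₁ : 1 ≤ q - 1 ∧ q - 1 ≤ q - 1 := by omega
  induction hh using Subgroup.closure_induction_left with
  | one => exact isNormalForm_one
  | mul_left x hx y _ ih =>
    rw [Matrix.SpecialLinearGroup.coe_mul]
    rcases hx with rfl | rfl
    · exact ih.Smat_mul
    · simpa [pMat_one hq] using ih.pMat_mul hq (k := 1) (by omega)
  | inv_mul_cancel x hx y _ ih =>
    rw [Matrix.SpecialLinearGroup.coe_mul]
    rcases hx with rfl | rfl
    · rw [coe_Smat_inv, neg_mul]
      exact ih.Smat_mul.neg
    · rw [coe_Tmat_inv hq, neg_mul, mul_assoc, mul_assoc]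
      exact (ih.Smat_mul.pMat_mul hq hq₁).Smat_mul.neg

lemma exists_pWord_of_nonnegPosDiag (hq : 3 ≤ q) {δ δ' : Bool} {L : List ℕ} (hL : Admissible q L)
    (hpos : NonnegPosDiag (sPow δ * pWord q L * sPow δ') ∨
      NonnegPosDiag (-(sPow δ * pWord q L * sPow δ'))) :
    ∃ L', Admissible q L' ∧ (sPow δ * pWord q L * sPow δ' = pWord q L' ∨
      sPow δ * pWord q L * sPow δ' = -pWord q L') := by
  obtain ⟨h₀₀, h₀₁, h₁₀, h₁₁⟩ := nonnegPosDiag_pWord (by omega) hL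
  cases δ <;> cases δ' <;>
    simp only [sPow, cond_false, cond_true, one_mul, mul_one, mul_Smat_eq, Smat_mul_eq] at hpos ⊢
  · exact ⟨L, hL, Or.inl rfl⟩
  -- for `δ ≠ δ'` the two off-diagonal entries are diagonal entries of the word, of opposite signs
  iterate 2
    exfalso
    rcases hpos with ⟨-, -, h, -⟩ | ⟨-, h, -, -⟩ <;>
      simp only [Matrix.neg_apply, Matrix.of_apply, Matrix.cons_val', Matrix.cons_val_zero,
        Matrix.cons_val_one, Matrix.cons_val_fin_one] at h <;> linarith
  · rcases hpos with ⟨h, -, -, -⟩ | ⟨-, h₀₁', h₁₀', -⟩ <;>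
      simp only [Matrix.neg_apply, Matrix.of_apply, Matrix.cons_val', Matrix.cons_val_zero,
        Matrix.cons_val_one, Matrix.cons_val_fin_one] at *
    · linarith
    · cases L with
      | nil =>
        refine ⟨[], hL, Or.inr ?_⟩
        ext i j; fin_cases i <;> fin_cases j <;> simp [pWord_nil]
      | cons k L => linarith [pWord_offDiag_pos hq hL]

lemma exists_pWord_of_isNormalForm (hq : 3 ≤ q) {m : 𝕄}
    (hm : IsNormalForm q m) (hpos : NonnegPosDiag m ∨ NonnegPosDiag (-m)) :
    ∃ L, Admissible q L ∧ (m = pWord q L ∨ m = -pWord q L) := by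
  obtain ⟨δ, δ', L, hL, rfl | rfl⟩ := hm
  · exact exists_pWord_of_nonnegPosDiag hq hL hpos
  · rw [neg_neg] at hpos
    obtain ⟨L', hL', h⟩ := exists_pWord_of_nonnegPosDiag hq hL hpos.symm
    exact ⟨L', hL', by rw [neg_inj, neg_eq_iff_eq_neg]; exact h.symm⟩

lemma nonnegPosDiag_of_ratios {m : 𝕄} (hdet : m.det = 1) (hd : 0 < m 1 1)
    (hb : 0 ≤ m 0 1 / m 1 1) (hlt : m 1 0 = 0 ∨ m 0 1 / m 1 1 < m 0 0 / m 1 0) :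
    NonnegPosDiag m := by
  rw [Matrix.det_fin_two] at hdet
  have hb' : 0 ≤ m 0 1 := by simpa [hd.ne'] using mul_nonneg hb hd.le
  suffices 0 < m 0 0 ∧ 0 ≤ m 1 0 from ⟨this.1, hb', this.2, hd⟩
  rcases hlt with hc | hlt
  · rw [hc] at hdet ⊢
    exact ⟨pos_of_mul_pos_left (by linarith) hd.le, le_rfl⟩
  · have hc : m 1 0 ≠ 0 := by intro hc; simp only [hc, div_zero] at hlt; linarith
    have key : m 0 0 / m 1 0 - m 0 1 / m 1 1 = 1 / (m 1 0 * m 1 1) := by field_simp; linarith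
    have hc : 0 < m 1 0 := pos_of_mul_pos_left (one_div_pos.mp (by linarith)) hd.le
    exact ⟨(div_pos_iff_of_pos_right hc).mp (by linarith), hc.le⟩

lemma opLE_coe_coe {r s : ℝ} : opLE r s ↔ r ≤ s := by
  rw [opLE, OnePoint.coe_eq_coe, le_iff_eq_or_lt]
  rfl

lemma ratios_of_ord (h : SL2)
    (hord : opLT (mob h ((0 : ℝ) : OnePoint ℝ)) (mob h ∞) ∧
            opLE (((0 : ℝ) : OnePoint ℝ)) (mob h ((0 : ℝ) : OnePoint ℝ))) :
    h 1 1 ≠ 0 ∧ 0 ≤ h 0 1 / h 1 1 ∧ (h 1 0 = 0 ∨ h 0 1 / h 1 1 < h 0 0 / h 1 0) := by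
  obtain ⟨hlt, hle⟩ := hord
  simp only [mob, mul_zero, zero_add] at hlt hle
  split_ifs at hlt hle with hd hc
  · exact hlt.elim
  · exact hlt.elim
  · exact ⟨hd, opLE_coe_coe.mp hle, Or.inl ‹_›⟩
  · exact ⟨hd, opLE_coe_coe.mp hle, Or.inr hlt⟩

lemma nonnegPosDiag_or_neg_of_ord (h : SL2)
    (hord : opLT (mob h ((0 : ℝ) : OnePoint ℝ)) (mob h ∞) ∧
            opLE (((0 : ℝ) : OnePoint ℝ)) (mob h ((0 : ℝ) : OnePoint ℝ))) :
    NonnegPosDiag h ∨ NonnegPosDiag (-h : 𝕄) := by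
  obtain ⟨hd, hb, hlt⟩ := ratios_of_ord h hord
  rcases hd.lt_or_gt with hd | hd
  · refine Or.inr (nonnegPosDiag_of_ratios (by rw [Matrix.det_neg, h.2]; norm_num)
      (by simpa using hd) ?_ ?_) <;> simpa [neg_div_neg_eq]
  · exact Or.inl (nonnegPosDiag_of_ratios h.2 hd hb hlt)

end HeckeTriangle

/-- if `h ∈ Γ_q` satisfies `h • ∞ > h • 0 ≥ 0` in `ℝ ∪ {∞}`, then there
are unique `ℓ ∈ ℕ₀` and `k₁, …, k_ℓ ∈ {1, …, q−1}` with `h = ±(p_{k₁} ⋯ p_{k_ℓ})`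
(the empty product being the identity matrix). -/
theorem stmt_11 (q : ℕ) (hq : 3 ≤ q) (h : SL2) (hh : h ∈ Hecke q)
    (hord : opLT (mob h ((0 : ℝ) : OnePoint ℝ)) (mob h ∞) ∧
            opLE (((0 : ℝ) : OnePoint ℝ)) (mob h ((0 : ℝ) : OnePoint ℝ))) :
    ∃! L : List ℕ, (∀ k ∈ L, 1 ≤ k ∧ k ≤ q - 1) ∧
      (h.1 = (L.map (fun k => pMat q (k : ℤ))).prod ∨
       h.1 = -((L.map (fun k => pMat q (k : ℤ))).prod)) := by
  obtain ⟨L, hL, hhL⟩ := HeckeTriangle.exists_pWord_of_isNormalForm hq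
    (HeckeTriangle.isNormalForm_of_mem_hecke (by omega) hh)
    (HeckeTriangle.nonnegPosDiag_or_neg_of_ord h hord)
  exact ⟨L, ⟨hL, hhL⟩, fun L' ⟨hL', hhL'⟩ => HeckeTriangle.eq_of_eq_pWord_or_neg hq hL' hL hhL' hhL⟩
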